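/- There exists exactly one formal power series f = Σ_{n≥0} κ_n q^n with real coefficients satisfying q·f² = (q² + q − 1)·f + 1 in ℝ⟦q⟧; it has κ_0 = 1, and its coefficients satisfy limsup_{n→∞} |κ_n|^{1/n} = (3+√5)/2, i.e. the radius of convergence of f equals R_* = (3−√5)/2. -/

import Mathlib

/-!
Comparing coefficients in `f = 1 + X (f + X f - f²)` determines `f` recursively, which gives
existence and uniqueness. For the growth, complete the square: `h = 2 X f - (X² + X - 1)` squares
to the discriminant `(X² + X - 1)² + 4 X = (1 + φ² X)(1 + ψ² X)(1 - X + X²)`, whose zeros have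
moduli `ψ²`, `φ²`, `1`, `1`. Over `ℂ`, `h` is therefore the product of the four series
`√(1 - γ X)`, each with coefficients bounded by `|γ|ⁿ ≤ (φ²)ⁿ`, so `|κₙ| = O(n³ (φ²)ⁿ)`.
Conversely, if `|κₙ| ≤ Bⁿ` eventually with `B < φ²`, then `h` converges at some `x = -t` with
`ψ² < t < φ²`, and there `h(x)²` equals the discriminant at `x`, which is negative.
-/

open PowerSeries Finset Filter Asymptotics Real
open scoped goldenRatio

noncomputable def qGoldenCoeff : ℕ → ℝ
  | 0 => 1
  | 1 => 0
  | n + 2 => qGoldenCoeff (n + 1) + qGoldenCoeff n -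
      ∑ i : Fin (n + 2), qGoldenCoeff i * qGoldenCoeff (n + 1 - i)

noncomputable def qGoldenSeries : ℝ⟦X⟧ := mk qGoldenCoeff

theorem qGolden_eq_iff_coeff {f : ℝ⟦X⟧} :
    X * f ^ 2 = (X ^ 2 + X - 1) * f + 1 ↔
      coeff 0 f = 1 ∧ coeff 1 f = 0 ∧ ∀ n, coeff (n + 2) f =
        coeff (n + 1) f + coeff n f - ∑ p ∈ antidiagonal (n + 1), coeff p.1 f * coeff p.2 f := by
  set g := 1 + X * (f + X * f - f * f)
  have hg0 : coeff 0 g = 1 := by simp [g]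
  have hg1 : coeff 1 g = coeff 0 f - coeff 0 f * coeff 0 f := by
    simp [g, coeff_succ_X_mul, coeff_zero_eq_constantCoeff]
  have hg : ∀ n, coeff (n + 2) g =
      coeff (n + 1) f + coeff n f - ∑ p ∈ antidiagonal (n + 1), coeff p.1 f * coeff p.2 f := by
    intro n
    simp [g, coeff_succ_X_mul, coeff_mul _ f f]
  have hfix : X * f ^ 2 = (X ^ 2 + X - 1) * f + 1 ↔ f = g := by
    constructor <;> intro h <;> linear_combination h
  rw [hfix, PowerSeries.ext_iff]
  constructor
  · intro h
    have h0 : coeff 0 f = 1 := (h 0).trans hg0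
    refine ⟨h0, ?_, fun n => (h (n + 2)).trans (hg n)⟩
    rw [h 1, hg1, h0]
    norm_num
  · rintro ⟨h0, h1, h⟩ (_ | _ | n)
    · exact h0.trans hg0.symm
    · rw [h1, hg1, h0]
      norm_num
    · exact (h n).trans (hg n).symm

theorem qGoldenSeries_eq : X * qGoldenSeries ^ 2 = (X ^ 2 + X - 1) * qGoldenSeries + 1 := by
  refine qGolden_eq_iff_coeff.mpr ⟨by simp [qGoldenSeries, qGoldenCoeff],
    by simp [qGoldenSeries, qGoldenCoeff], fun n => ?_⟩
  simp only [qGoldenSeries, coeff_mk]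
  rw [qGoldenCoeff, Fin.sum_univ_eq_sum_range (fun i => qGoldenCoeff i * qGoldenCoeff (n + 1 - i)),
    Nat.sum_antidiagonal_eq_sum_range_succ_mk]

theorem eq_qGoldenSeries {f : ℝ⟦X⟧} (hf : X * f ^ 2 = (X ^ 2 + X - 1) * f + 1) :
    f = qGoldenSeries := by
  obtain ⟨hf0, hf1, hf⟩ := qGolden_eq_iff_coeff.mp hf
  obtain ⟨hq0, hq1, hq⟩ := qGolden_eq_iff_coeff.mp qGoldenSeries_eq
  ext n
  induction n using Nat.strong_induction_on with
  | _ n ih =>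
    match n, ih with
    | 0, _ => rw [hf0, hq0]
    | 1, _ => rw [hf1, hq1]
    | n + 2, ih =>
      rw [hf n, hq n, ih (n + 1) (by omega), ih n (by omega)]
      congr 1
      refine sum_congr rfl fun p hp => ?_
      have hpn := mem_antidiagonal.mp hp
      rw [ih p.1 (by omega), ih p.2 (by omega)]

theorem norm_coeff_mul_le {R : Type*} [NormedRing R] {f g : R⟦X⟧} {r : ℝ} {k l : ℕ} (hr : 0 ≤ r)
    (hf : ∀ n, ‖coeff n f‖ ≤ ((n : ℝ) + 1) ^ k * r ^ n)
    (hg : ∀ n, ‖coeff n g‖ ≤ ((n : ℝ) + 1) ^ l * r ^ n) (n : ℕ) :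
    ‖coeff n (f * g)‖ ≤ ((n : ℝ) + 1) ^ (k + l + 1) * r ^ n := by
  have hterm : ∀ p ∈ antidiagonal n,
      ‖coeff p.1 f * coeff p.2 g‖ ≤ ((n : ℝ) + 1) ^ (k + l) * r ^ n := by
    intro p hp
    have hp := mem_antidiagonal.mp hp
    have h1 : (p.1 : ℝ) + 1 ≤ n + 1 := by exact_mod_cast (by omega : p.1 + 1 ≤ n + 1)
    have h2 : (p.2 : ℝ) + 1 ≤ n + 1 := by exact_mod_cast (by omega : p.2 + 1 ≤ n + 1)
    calc ‖coeff p.1 f * coeff p.2 g‖ ≤ ‖coeff p.1 f‖ * ‖coeff p.2 g‖ := norm_mul_le _ _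
      _ ≤ ((p.1 + 1 : ℝ) ^ k * r ^ p.1) * ((p.2 + 1 : ℝ) ^ l * r ^ p.2) :=
        mul_le_mul (hf _) (hg _) (norm_nonneg _) (by positivity)
      _ ≤ ((n + 1 : ℝ) ^ k * r ^ p.1) * ((n + 1 : ℝ) ^ l * r ^ p.2) := by gcongr
      _ = ((n : ℝ) + 1) ^ (k + l) * r ^ n := by rw [← hp]; ring
  calc ‖coeff n (f * g)‖ ≤ ∑ p ∈ antidiagonal n, ‖coeff p.1 f * coeff p.2 g‖ := by
        rw [coeff_mul]; exact norm_sum_le _ _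
    _ ≤ ∑ _p ∈ antidiagonal n, ((n : ℝ) + 1) ^ (k + l) * r ^ n := sum_le_sum hterm
    _ = ((n : ℝ) + 1) ^ (k + l + 1) * r ^ n := by
        rw [sum_const, Nat.card_antidiagonal, nsmul_eq_mul]; push_cast; ring

theorem tsum_coeff_mul_mul_pow {R : Type*} [NormedCommRing R] [CompleteSpace R] {f g : R⟦X⟧}
    {x : R} (hf : Summable fun n => ‖coeff n f * x ^ n‖)
    (hg : Summable fun n => ‖coeff n g * x ^ n‖) :
    ∑' n, coeff n (f * g) * x ^ n = (∑' n, coeff n f * x ^ n) * ∑' n, coeff n g * x ^ n := by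
  rw [tsum_mul_tsum_eq_tsum_sum_antidiagonal_of_summable_norm hf hg]
  refine tsum_congr fun n => ?_
  rw [coeff_mul, sum_mul]
  refine sum_congr rfl fun p hp => ?_
  rw [← mem_antidiagonal.mp hp, pow_add]
  ring

theorem tsum_coeff_coe_mul_pow {R : Type*} [CommSemiring R] [TopologicalSpace R]
    (p : Polynomial R) (x : R) : ∑' n, coeff n (p : R⟦X⟧) * x ^ n = p.eval x := by
  rw [Polynomial.eval_eq_sum_range, tsum_eq_sum (s := range (p.natDegree + 1)) fun n hn => ?_]
  · simp only [Polynomial.coeff_coe]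
  · rw [Polynomial.coeff_coe, Polynomial.coeff_eq_zero_of_natDegree_lt, zero_mul]
    simpa [Nat.lt_succ_iff] using hn

theorem eval_nonneg_of_sq_eq_coe {g : ℝ⟦X⟧} {p : Polynomial ℝ} (hgp : g ^ 2 = p) {x : ℝ}
    (hg : Summable fun n => ‖coeff n g * x ^ n‖) : 0 ≤ p.eval x := by
  rw [← tsum_coeff_coe_mul_pow, ← hgp, sq, tsum_coeff_mul_mul_pow hg hg]
  exact mul_self_nonneg _

theorem eq_of_sq_eq_sq_of_constantCoeff_eq {R : Type*} [CommRing R] [NoZeroDivisors R]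
    [CharZero R] {a b : R⟦X⟧} (h : a ^ 2 = b ^ 2) (hab : constantCoeff a = constantCoeff b)
    (hb : constantCoeff b ≠ 0) : a = b := by
  refine (sq_eq_sq_iff_eq_or_eq_neg.mp h).resolve_right fun hneg => hb ?_
  have := congrArg constantCoeff hneg
  rw [map_neg, hab] at this
  exact self_eq_neg.mp this

theorem one_sub_C_mul_X_mul_one_sub_C_mul_X {R : Type*} [CommRing R] (a b : R) :
    (1 - C a * X) * (1 - C b * X) = 1 - C (a + b) * X + C (a * b) * X ^ 2 := by
  simp only [map_add, map_mul]
  ring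

theorem catalan_le_four_pow (n : ℕ) : catalan n ≤ 4 ^ n :=
  (catalan_eq_centralBinom_div n ▸ Nat.div_le_self _ _).trans (Nat.centralBinom_le_four_pow n)

/-- `√(1 - γ X)`: the Catalan series `c = 1 + X c²` gives `(1 - 2 X c)² = 1 - 4 X`. -/
noncomputable def sqrtOneSubMul {K : Type*} [Field K] (γ : K) : K⟦X⟧ :=
  rescale (γ / 4) (1 - 2 * X * PowerSeries.map (Nat.castRingHom K) catalanSeries)

section sqrtOneSubMul

variable {K : Type*}

theorem sqrtOneSubMul_sq [Field K] [CharZero K] (γ : K) :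
    sqrtOneSubMul γ ^ 2 = 1 - C γ * X := by
  set c := PowerSeries.map (Nat.castRingHom K) catalanSeries
  have hc : c ^ 2 * X + 1 = c := by
    simpa [c] using congrArg (PowerSeries.map (Nat.castRingHom K)) catalanSeries_sq_mul_X_add_one
  have hsq : (1 - 2 * X * c) ^ 2 = 1 - 4 * X := by linear_combination (4 * X) * hc
  have h4 : (4 : K⟦X⟧) * C (γ / 4) = C γ := by
    rw [← map_ofNat C 4, ← map_mul, mul_div_cancel₀ γ (by norm_num : (4 : K) ≠ 0)]
  rw [sqrtOneSubMul, ← map_pow, hsq, map_sub, map_one, map_mul, rescale_X, map_ofNat, ← mul_assoc,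
    h4]

theorem constantCoeff_sqrtOneSubMul [Field K] (γ : K) : constantCoeff (sqrtOneSubMul γ) = 1 := by
  rw [sqrtOneSubMul, ← coeff_zero_eq_constantCoeff_apply, coeff_rescale]
  simp

theorem norm_coeff_sqrtOneSubMul_le [RCLike K] (γ : K) (n : ℕ) :
    ‖coeff n (sqrtOneSubMul γ)‖ ≤ ‖γ‖ ^ n := by
  rcases n with _ | n
  · simp [sqrtOneSubMul]
  have hcat : 2 * (catalan n : ℝ) ≤ 4 ^ (n + 1) := by
    have := catalan_le_four_pow n
    rw [pow_succ]
    exact_mod_cast (by omega : 2 * catalan n ≤ 4 ^ n * 4)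
  have hcoeff : coeff (n + 1) (sqrtOneSubMul γ) = -((γ / 4) ^ (n + 1) * (2 * catalan n)) := by
    rw [sqrtOneSubMul, coeff_rescale, ← map_ofNat C 2, mul_assoc, map_sub, coeff_C_mul,
      coeff_succ_X_mul]
    simp
  rw [hcoeff, norm_neg, norm_mul, norm_pow, norm_div, norm_mul, RCLike.norm_natCast, div_pow]
  simp only [RCLike.norm_ofNat]
  calc ‖γ‖ ^ (n + 1) / 4 ^ (n + 1) * (2 * catalan n)
      ≤ ‖γ‖ ^ (n + 1) / 4 ^ (n + 1) * 4 ^ (n + 1) := by gcongr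
    _ = ‖γ‖ ^ (n + 1) := div_mul_cancel₀ _ (by positivity)

end sqrtOneSubMul

theorem eventually_abs_le_pow_of_abs_le {a : ℕ → ℝ} {C r B : ℝ} {k : ℕ} (hr : 0 ≤ r)
    (hB : r < B) (ha : ∀ n, |a n| ≤ C * ((n : ℝ) + 1) ^ k * r ^ n) :
    ∀ᶠ n in atTop, |a n| ≤ B ^ n := by
  have hC : 0 ≤ C := by simpa using (abs_nonneg _).trans (ha 0)
  have ho := (isLittleO_pow_const_mul_const_pow_const_pow_of_norm_lt k
    (by rwa [Real.norm_of_nonneg hr] : ‖r‖ < B)).const_mul_left (C * 2 ^ k)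
  filter_upwards [ho.bound one_pos, eventually_ge_atTop 1] with n hn hn1
  have h2 : ((n : ℝ) + 1) ^ k ≤ 2 ^ k * (n : ℝ) ^ k := by
    rw [← mul_pow]
    gcongr
    linarith [(Nat.one_le_cast (α := ℝ)).mpr hn1]
  calc |a n| ≤ C * ((n : ℝ) + 1) ^ k * r ^ n := ha n
    _ ≤ C * (2 ^ k * (n : ℝ) ^ k) * r ^ n := by gcongr
    _ = C * 2 ^ k * ((n : ℝ) ^ k * r ^ n) := by ring
    _ ≤ ‖C * 2 ^ k * ((n : ℝ) ^ k * r ^ n)‖ := Real.le_norm_self _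
    _ ≤ 1 * ‖B ^ n‖ := hn
    _ = B ^ n := by rw [one_mul, Real.norm_of_nonneg (pow_nonneg (hr.trans hB.le) n)]

theorem exists_abs_le_mul_pow_of_eventually {a : ℕ → ℝ} {B : ℝ} (hB : 0 < B)
    (h : ∀ᶠ n in atTop, |a n| ≤ B ^ n) : ∃ C, ∀ n, |a n| ≤ C * B ^ n := by
  have hO : a =O[atTop] fun n => B ^ n :=
    IsBigO.of_bound 1 (h.mono fun n hn => by simpa [abs_of_pos hB] using hn)
  obtain ⟨C, hC⟩ := (isBigO_nat_atTop_iff fun n hn => absurd hn (pow_ne_zero n hB.ne')).mp hO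
  exact ⟨C, fun n => by simpa [abs_of_pos hB] using hC n⟩

theorem limsup_abs_rpow_inv_eq {a : ℕ → ℝ} {A : ℝ} (hA : 1 < A)
    (upper : ∀ B, A < B → ∀ᶠ n in atTop, |a n| ≤ B ^ n)
    (lower : ∀ B, 1 < B → B < A → ¬ ∀ᶠ n in atTop, |a n| ≤ B ^ n) :
    limsup (fun n : ℕ => |a n| ^ ((n : ℝ)⁻¹)) atTop = A := by
  have hroot : ∀ {B : ℝ}, 0 ≤ B →
      ((∀ᶠ n : ℕ in atTop, |a n| ^ ((n : ℝ)⁻¹) ≤ B) ↔ ∀ᶠ n in atTop, |a n| ≤ B ^ n) := by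
    intro B hB
    refine eventually_congr ((eventually_ne_atTop 0).mono fun n hn => ?_)
    rw [Real.rpow_inv_le_iff_of_pos (abs_nonneg _) hB (by positivity), Real.rpow_natCast]
  have hbdd : IsBoundedUnder (· ≤ ·) atTop fun n : ℕ => |a n| ^ ((n : ℝ)⁻¹) :=
    ⟨A + 1, (hroot (by linarith)).mpr (upper _ (by linarith))⟩
  have hcobdd : IsCoboundedUnder (· ≤ ·) atTop fun n : ℕ => |a n| ^ ((n : ℝ)⁻¹) :=
    isCoboundedUnder_le_of_le atTop fun n => Real.rpow_nonneg (abs_nonneg _) _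
  refine le_antisymm (le_of_forall_gt_imp_ge_of_dense fun B hB =>
    limsup_le_of_le hcobdd ((hroot (by linarith)).mpr (upper B hB))) ?_
  by_contra! hlt
  obtain ⟨B, hB, hBA⟩ := exists_between (max_lt hlt hA)
  have hB1 : 1 < B := (le_max_right _ _).trans_lt hB
  refine lower B hB1 hBA ((hroot (by linarith)).mp ?_)
  exact (eventually_lt_of_limsup_lt ((le_max_left _ _).trans_lt hB) hbdd).mono fun n hn => hn.le

theorem norm_eq_one_of_sq_sub_add_one_eq_zero {𝕜 : Type*} [NormedField 𝕜] {z : 𝕜}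
    (hz : z ^ 2 - z + 1 = 0) : ‖z‖ = 1 := by
  have h3 : z ^ 3 = -1 := by linear_combination (z + 1) * hz
  have : ‖z‖ ^ 3 = 1 := by rw [← norm_pow, h3, norm_neg, norm_one]
  exact (pow_eq_one_iff_of_nonneg (norm_nonneg z) (by norm_num)).mp this

theorem goldenRatio_sq_mul_goldenConj_sq : φ ^ 2 * ψ ^ 2 = 1 := by
  rw [← mul_pow, goldenRatio_mul_goldenConj]
  norm_num

theorem goldenRatio_sq_add_goldenConj_sq : φ ^ 2 + ψ ^ 2 = 3 := by
  rw [goldenRatio_sq, goldenConj_sq]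
  linarith [goldenRatio_add_goldenConj]

theorem three_add_sqrt_five_div_two : (3 + √5) / 2 = φ ^ 2 := by
  rw [goldenRatio_sq]
  ring

/-- The discriminant of `X F² - (X² + X - 1) F - 1`. -/
noncomputable def qGoldenDisc : Polynomial ℝ :=
  (Polynomial.X ^ 2 + Polynomial.X - 1) ^ 2 + 4 * Polynomial.X

theorem coe_qGoldenDisc : (qGoldenDisc : ℝ⟦X⟧) = (X ^ 2 + X - 1) ^ 2 + 4 * X := by
  have h4 : ((4 : Polynomial ℝ) : ℝ⟦X⟧) = 4 := map_ofNat Polynomial.coeToPowerSeries.ringHom 4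
  push_cast [qGoldenDisc, h4]
  rfl

theorem qGoldenDisc_eval_neg_lt_zero {t : ℝ} (h1 : ψ ^ 2 < t) (h2 : t < φ ^ 2) :
    qGoldenDisc.eval (-t) < 0 := by
  have hfac : qGoldenDisc.eval (-t) = (t - φ ^ 2) * (t - ψ ^ 2) * (t ^ 2 + t + 1) := by
    simp only [qGoldenDisc, Polynomial.eval_add, Polynomial.eval_pow, Polynomial.eval_sub,
      Polynomial.eval_X, Polynomial.eval_one, Polynomial.eval_mul, Polynomial.eval_ofNat]
    linear_combination (t ^ 2 + t + 1) * t * goldenRatio_sq_add_goldenConj_sq -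
      (t ^ 2 + t + 1) * goldenRatio_sq_mul_goldenConj_sq
  rw [hfac]
  exact mul_neg_of_neg_of_pos (mul_neg_of_neg_of_pos (by linarith) (by linarith))
    (by nlinarith [sq_nonneg (t + 1 / 2)])

theorem map_qGoldenDisc_eq_prod {ω : ℂ} (hω : ω ^ 2 - ω + 1 = 0) :
    PowerSeries.map (algebraMap ℝ ℂ) qGoldenDisc =
      (1 - C (-((φ : ℂ) ^ 2)) * X) * (1 - C (-((ψ : ℂ) ^ 2)) * X) *
        ((1 - C ω * X) * (1 - C (1 - ω) * X)) := by
  have hsum : -((φ : ℂ) ^ 2) + -((ψ : ℂ) ^ 2) = -3 := by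
    have h3 : (φ : ℂ) ^ 2 + (ψ : ℂ) ^ 2 = 3 := by exact_mod_cast goldenRatio_sq_add_goldenConj_sq
    linear_combination -h3
  have hprod : -((φ : ℂ) ^ 2) * -((ψ : ℂ) ^ 2) = 1 := by
    rw [neg_mul_neg]; exact_mod_cast goldenRatio_sq_mul_goldenConj_sq
  have hprod' : ω * (1 - ω) = 1 := by linear_combination -hω
  rw [one_sub_C_mul_X_mul_one_sub_C_mul_X, one_sub_C_mul_X_mul_one_sub_C_mul_X, hsum, hprod,
    hprod', add_sub_cancel, coe_qGoldenDisc]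
  simp only [map_neg, map_ofNat, map_one, map_add, map_sub, map_pow, map_mul, map_X]
  ring

theorem exists_sq_eq_qGoldenDisc_norm_coeff_le :
    ∃ H : ℂ⟦X⟧, H ^ 2 = PowerSeries.map (algebraMap ℝ ℂ) qGoldenDisc ∧ constantCoeff H = 1 ∧
      ∀ n, ‖coeff n H‖ ≤ ((n : ℝ) + 1) ^ 3 * (φ ^ 2) ^ n := by
  -- a primitive sixth root of unity
  obtain ⟨ω, hω⟩ : ∃ ω : ℂ, ω ^ 2 - ω + 1 = 0 := by
    obtain ⟨s, hs⟩ := IsAlgClosed.exists_eq_mul_self (discrim (1 : ℂ) (-1) 1)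
    obtain ⟨ω, hω⟩ := exists_quadratic_eq_zero one_ne_zero ⟨s, hs⟩
    exact ⟨ω, by linear_combination hω⟩
  have hφ : (1 : ℝ) ≤ φ ^ 2 := one_le_pow₀ one_lt_goldenRatio.le
  have hS : ∀ γ : ℂ, ‖γ‖ ≤ φ ^ 2 →
      ∀ n, ‖coeff n (sqrtOneSubMul γ)‖ ≤ ((n : ℝ) + 1) ^ 0 * (φ ^ 2) ^ n := fun γ hγ n => by
    rw [pow_zero, one_mul]
    exact (norm_coeff_sqrtOneSubMul_le γ n).trans (pow_le_pow_left₀ (norm_nonneg γ) hγ n)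
  have hω1 : ‖ω‖ ≤ φ ^ 2 := (norm_eq_one_of_sq_sub_add_one_eq_zero hω).trans_le hφ
  have hω2 : ‖1 - ω‖ ≤ φ ^ 2 :=
    (norm_eq_one_of_sq_sub_add_one_eq_zero (by linear_combination hω)).trans_le hφ
  have hα : ‖-((φ : ℂ) ^ 2)‖ ≤ φ ^ 2 := by
    rw [norm_neg, ← Complex.ofReal_pow, Complex.norm_real, Real.norm_of_nonneg (by positivity)]
  have hβ : ‖-((ψ : ℂ) ^ 2)‖ ≤ φ ^ 2 := by
    rw [norm_neg, ← Complex.ofReal_pow, Complex.norm_real, Real.norm_of_nonneg (by positivity)]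
    nlinarith [goldenRatio_sq_mul_goldenConj_sq, sq_nonneg ψ]
  refine ⟨sqrtOneSubMul (-((φ : ℂ) ^ 2)) * sqrtOneSubMul (-((ψ : ℂ) ^ 2)) *
    sqrtOneSubMul ω * sqrtOneSubMul (1 - ω), ?_, by simp [constantCoeff_sqrtOneSubMul],
    norm_coeff_mul_le (by positivity) (norm_coeff_mul_le (by positivity)
      (norm_coeff_mul_le (by positivity) (hS _ hα) (hS _ hβ)) (hS _ hω1)) (hS _ hω2)⟩
  rw [map_qGoldenDisc_eq_prod hω, mul_pow, mul_pow, mul_pow, sqrtOneSubMul_sq, sqrtOneSubMul_sq,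
    sqrtOneSubMul_sq, sqrtOneSubMul_sq, mul_assoc _ (1 - C ω * X)]

theorem abs_coeff_X_sq_add_X_sub_one_le (n : ℕ) : |coeff n (X ^ 2 + X - 1 : ℝ⟦X⟧)| ≤ 1 := by
  rcases n with _ | _ | _ | n <;> simp [coeff_X_pow, coeff_X, coeff_one]

theorem coeff_succ_two_mul_X_mul (f : ℝ⟦X⟧) (n : ℕ) :
    coeff (n + 1) (2 * X * f) = 2 * coeff n f := by
  rw [mul_comm 2 X, mul_assoc, coeff_succ_X_mul, ← map_ofNat C 2, coeff_C_mul]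

section qGolden

variable {f : ℝ⟦X⟧}

theorem sq_two_mul_X_mul_sub (hf : X * f ^ 2 = (X ^ 2 + X - 1) * f + 1) :
    (2 * X * f - (X ^ 2 + X - 1)) ^ 2 = (qGoldenDisc : ℝ⟦X⟧) := by
  rw [coe_qGoldenDisc]
  linear_combination (4 * X) * hf

theorem abs_coeff_two_mul_X_mul_sub_le (hf : X * f ^ 2 = (X ^ 2 + X - 1) * f + 1) (n : ℕ) :
    |coeff n (2 * X * f - (X ^ 2 + X - 1))| ≤ ((n : ℝ) + 1) ^ 3 * (φ ^ 2) ^ n := by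
  obtain ⟨H, hH2, hH0, hH⟩ := exists_sq_eq_qGoldenDisc_norm_coeff_le
  have hmap : PowerSeries.map (algebraMap ℝ ℂ) (2 * X * f - (X ^ 2 + X - 1)) = H := by
    refine eq_of_sq_eq_sq_of_constantCoeff_eq ?_ ?_ (by rw [hH0]; exact one_ne_zero)
    · rw [← map_pow, sq_two_mul_X_mul_sub hf, hH2]
    · rw [hH0]
      simp
  have := hH n
  rwa [← hmap, coeff_map, Complex.coe_algebraMap, Complex.norm_real, Real.norm_eq_abs] at this

theorem abs_coeff_le_of_qGolden (hf : X * f ^ 2 = (X ^ 2 + X - 1) * f + 1) (n : ℕ) :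
    |coeff n f| ≤ 8 * φ ^ 2 * ((n : ℝ) + 1) ^ 3 * (φ ^ 2) ^ n := by
  have hφ : (1 : ℝ) ≤ φ ^ 2 := one_le_pow₀ one_lt_goldenRatio.le
  have h1 := abs_coeff_two_mul_X_mul_sub_le hf (n + 1)
  have h2 := abs_coeff_X_sq_add_X_sub_one_le (n + 1)
  rw [map_sub, coeff_succ_two_mul_X_mul] at h1
  push_cast at h1
  have hone : 1 ≤ ((n : ℝ) + 1 + 1) ^ 3 * (φ ^ 2) ^ (n + 1) :=
    one_le_mul_of_one_le_of_one_le (one_le_pow₀ (by linarith [n.cast_nonneg (α := ℝ)]))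
      (one_le_pow₀ hφ)
  have hle : |coeff n f| ≤ ((n : ℝ) + 1 + 1) ^ 3 * (φ ^ 2) ^ (n + 1) := by
    rw [abs_le] at h1 h2 ⊢
    constructor <;> linarith
  calc |coeff n f| ≤ ((n : ℝ) + 1 + 1) ^ 3 * (φ ^ 2) ^ (n + 1) := hle
    _ ≤ (2 * ((n : ℝ) + 1)) ^ 3 * (φ ^ 2) ^ (n + 1) := by gcongr; linarith
    _ = 8 * φ ^ 2 * ((n : ℝ) + 1) ^ 3 * (φ ^ 2) ^ n := by ring

theorem abs_coeff_two_mul_X_mul_sub_le_of_abs_coeff_le {C B : ℝ} (hB : 1 ≤ B)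
    (hf : ∀ n, |coeff n f| ≤ C * B ^ n) (n : ℕ) :
    |coeff n (2 * X * f - (X ^ 2 + X - 1))| ≤ (2 * C + 1) * B ^ n := by
  have hC : 0 ≤ C := by simpa using (abs_nonneg _).trans (hf 0)
  have hX : |coeff n (2 * X * f)| ≤ 2 * C * B ^ n := by
    rcases n with _ | n
    · simpa [mul_assoc] using hC
    · rw [coeff_succ_two_mul_X_mul, abs_mul, abs_two, pow_succ, mul_assoc]
      gcongr
      exact (hf n).trans (mul_le_mul_of_nonneg_left (le_mul_of_one_le_right (by positivity) hB) hC)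
  calc |coeff n (2 * X * f - (X ^ 2 + X - 1))|
      ≤ |coeff n (2 * X * f)| + |coeff n (X ^ 2 + X - 1 : ℝ⟦X⟧)| := by
        rw [map_sub]; exact abs_sub _ _
    _ ≤ 2 * C * B ^ n + 1 * B ^ n := by
        gcongr
        simpa using (abs_coeff_X_sq_add_X_sub_one_le n).trans (one_le_pow₀ hB)
    _ = (2 * C + 1) * B ^ n := by ring

theorem not_eventually_abs_coeff_le_pow (hf : X * f ^ 2 = (X ^ 2 + X - 1) * f + 1) {B : ℝ}
    (hB1 : 1 < B) (hB : B < φ ^ 2) : ¬ ∀ᶠ n in atTop, |coeff n f| ≤ B ^ n := by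
  intro hev
  obtain ⟨C, hC⟩ := exists_abs_le_mul_pow_of_eventually (by linarith) hev
  have hψ : ψ ^ 2 < B⁻¹ := by
    rw [← inv_inv (ψ ^ 2), ← eq_inv_of_mul_eq_one_left goldenRatio_sq_mul_goldenConj_sq]
    exact inv_strictAnti₀ (by linarith) hB
  obtain ⟨t, hψt, htB⟩ := exists_between hψ
  have ht0 : 0 < t := (sq_nonneg ψ).trans_lt hψt
  have htφ : t < φ ^ 2 := htB.trans ((inv_lt_one_of_one_lt₀ hB1).trans (hB1.trans hB))
  have hBt : B * t < 1 := by
    have := mul_lt_mul_of_pos_left htB (by linarith : 0 < B)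
    rwa [mul_inv_cancel₀ (by linarith)] at this
  have hsum : Summable fun n => ‖coeff n (2 * X * f - (X ^ 2 + X - 1)) * (-t) ^ n‖ := by
    refine Summable.of_nonneg_of_le (fun n => norm_nonneg _) (fun n => ?_)
      ((summable_geometric_of_lt_one (by positivity) hBt).mul_left (2 * C + 1))
    rw [Real.norm_eq_abs, abs_mul, abs_pow, abs_neg, abs_of_pos ht0, mul_pow, ← mul_assoc]
    exact mul_le_mul_of_nonneg_right
      (abs_coeff_two_mul_X_mul_sub_le_of_abs_coeff_le hB1.le hC n) (by positivity)
  exact (qGoldenDisc_eval_neg_lt_zero hψt htφ).not_ge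
    (eval_nonneg_of_sq_eq_coe (sq_two_mul_X_mul_sub hf) hsum)

end qGolden

theorem qGoldenRatio_exists_unique_and_radius :
    (∃! f : PowerSeries ℝ,
      PowerSeries.X * f ^ 2 = (PowerSeries.X ^ 2 + PowerSeries.X - 1) * f + 1) ∧
    ∀ f : PowerSeries ℝ,
      PowerSeries.X * f ^ 2 = (PowerSeries.X ^ 2 + PowerSeries.X - 1) * f + 1 →
        PowerSeries.coeff 0 f = 1 ∧
        Filter.limsup (fun n : ℕ => |PowerSeries.coeff n f| ^ ((n : ℝ)⁻¹))
          Filter.atTop = (3 + Real.sqrt 5) / 2 := by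
  refine ⟨⟨qGoldenSeries, qGoldenSeries_eq, fun f hf => eq_qGoldenSeries hf⟩,
    fun f hf => ⟨(qGolden_eq_iff_coeff.mp hf).1, ?_⟩⟩
  rw [three_add_sqrt_five_div_two]
  exact limsup_abs_rpow_inv_eq (one_lt_pow₀ one_lt_goldenRatio two_ne_zero)
    (fun B hB => eventually_abs_le_pow_of_abs_le (by positivity) hB (abs_coeff_le_of_qGolden hf))
    (fun B hB1 hB => not_eventually_abs_coeff_le_pow hf hB1 hB)
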